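/- arXiv:0805.2907 — 2 statements merged into one kernel-verified Lean document; each statement's English description precedes it below -/
import Mathlib

section
/- For a rational subspace r and a regular face F for X\r, the map g ↦ P_{X\r}^{F} * g is an injection from F(X∩r) into F(X), and ∇_{X\r}(P_{X\r}^{F} * g) = g for all g ∈ F(X∩r). -/
open Function

attribute [local instance] Classical.propDecidable

noncomputable section

/-- The lattice `Γ = ι → ℤ`. -/
abbrev ZLat (ι : Type*) := ι → ℤ
/-- The ambient real vector space `V = Γ ⊗ ℝ = ι → ℝ`. -/
abbrev Amb (ι : Type*) := ι → ℝ

variable {ι : Type*} [Fintype ι]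

/-- Embedding of the lattice into the ambient space. -/
def castV (γ : ZLat ι) : Amb ι := fun i => (γ i : ℝ)

/-- Standard pairing on `V`. -/
def dotR (u v : Amb ι) : ℝ := ∑ i, u i * v i

/-- The difference operator `∇ₐ`. -/
def nab (a : ZLat ι) (f : ZLat ι → ℤ) : ZLat ι → ℤ := fun b => f b - f (b - a)

/-- `∇_Y = ∏_{a ∈ Y} ∇ₐ` for a list `Y`. -/
def nabL (Y : List (ZLat ι)) (f : ZLat ι → ℤ) : ZLat ι → ℤ := Y.foldr nab f

/-- Delta function at `0`. -/
def delta0 : ZLat ι → ℤ := fun γ => if γ = 0 then 1 else 0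

/-- The partition function of a list `Y`: the number of ways of writing `γ` as a
nonnegative integral combination of the entries of `Y`. -/
def partFn (Y : List (ZLat ι)) : ZLat ι → ℤ :=
  fun γ => Nat.card {k : Fin Y.length → ℕ // ∑ i, (k i : ℤ) • Y.get i = γ}

/-- The cone `C(Y)` of nonnegative real combinations of the entries of `Y`. -/
def coneC (Y : List (ZLat ι)) : Set (Amb ι) :=
  {v | ∃ t : Fin Y.length → ℝ, (∀ i, 0 ≤ t i) ∧ v = ∑ i, t i • castV (Y.get i)}

/-- `C(Y)` is pointed: it contains no line. -/
def PointedList (Y : List (ZLat ι)) : Prop :=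
  ∀ v ∈ coneC Y, -v ∈ coneC Y → v = 0

/-- The zonotope `B(Y) = {∑ tᵢ aᵢ : 0 ≤ tᵢ ≤ 1}`. -/
def zono (Y : List (ZLat ι)) : Set (Amb ι) :=
  {v | ∃ t : Fin Y.length → ℝ, (∀ i, 0 ≤ t i ∧ t i ≤ 1) ∧ v = ∑ i, t i • castV (Y.get i)}

/-- The real span of a list of lattice vectors. -/
def spanOf (Y : List (ZLat ι)) : Submodule ℝ (Amb ι) :=
  Submodule.span ℝ (castV '' {a | a ∈ Y})

/-- A subspace is rational (relative to `X`) if it is spanned by a sublist of `X`. -/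
def IsRational (X : List (ZLat ι)) (r : Submodule ℝ (Amb ι)) : Prop :=
  ∃ Y : List (ZLat ι), (∀ a ∈ Y, a ∈ X) ∧ r = spanOf Y

/-- The sublist `X ∩ r`. -/
def inSub (X : List (ZLat ι)) (r : Submodule ℝ (Amb ι)) : List (ZLat ι) :=
  X.filter (fun a => decide (castV a ∈ r))

/-- The sublist `X \ r`. -/
def outSub (X : List (ZLat ι)) (r : Submodule ℝ (Amb ι)) : List (ZLat ι) :=
  X.filter (fun a => decide (castV a ∉ r))

/-- The operator `∇_{X \ r}`. -/
def nabOut (X : List (ZLat ι)) (r : Submodule ℝ (Amb ι)) (f : ZLat ι → ℤ) : ZLat ι → ℤ :=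
  nabL (outSub X r) f

/-- The space `𝓕(X)`: `∇_{X\r} f` is supported on `Γ ∩ r` for every rational `r`. -/
def memF (X : List (ZLat ι)) (f : ZLat ι → ℤ) : Prop :=
  ∀ r, IsRational X r → support (nabOut X r f) ⊆ {γ | castV γ ∈ r}

/-- The Dahmen–Micchelli space of a list `Y` (inside its span): `f` is killed by
`∇_{Y \ H}` for every rational hyperplane `H` of the span of `Y`. -/
def memDM (Y : List (ZLat ι)) (f : ZLat ι → ℤ) : Prop :=
  ∀ H, IsRational Y H → Module.finrank ℝ H + 1 = Module.finrank ℝ (spanOf Y) →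
    nabOut Y H f = 0

/-- `𝓕(X ∩ r)`, viewed as functions on `Γ` supported on `Γ ∩ r`. -/
def memFrel (X : List (ZLat ι)) (r : Submodule ℝ (Amb ι)) (g : ZLat ι → ℤ) : Prop :=
  support g ⊆ {γ | castV γ ∈ r} ∧ memF (inSub X r) g

/-- `DM(X ∩ r)`, viewed as functions on `Γ` supported on `Γ ∩ r`. -/
def memDMrel (X : List (ZLat ι)) (r : Submodule ℝ (Amb ι)) (g : ZLat ι → ℤ) : Prop :=
  support g ⊆ {γ | castV γ ∈ r} ∧ memDM (inSub X r) g

/-- `u` is a regular vector for `X \ r`:  `u ∈ r^⊥` and `⟨u, a⟩ ≠ 0` for all `a ∈ X \ r`.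
It determines the regular face `F` containing it. -/
def Reg (X : List (ZLat ι)) (r : Submodule ℝ (Amb ι)) (u : Amb ι) : Prop :=
  (∀ v ∈ r, dotR u v = 0) ∧ ∀ a ∈ X, castV a ∉ r → dotR u (castV a) ≠ 0

/-- The sublist `B ⊆ X \ r` of elements negative on `u`. -/
def negPart (X : List (ZLat ι)) (r : Submodule ℝ (Amb ι)) (u : Amb ι) : List (ZLat ι) :=
  (outSub X r).filter (fun a => decide (dotR u (castV a) < 0))

/-- The list `[A, -B]`: entries of `X \ r`, with sign flipped on the part negative on `u`. -/
def signedOut (X : List (ZLat ι)) (r : Submodule ℝ (Amb ι)) (u : Amb ι) : List (ZLat ι) :=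
  (outSub X r).map (fun a => if 0 < dotR u (castV a) then a else -a)

/-- The special function `𝓟_{X\r}^F` for the face `F ∋ u`:
`(-1)^{|B|} τ_{-∑_{b∈B} b} (∏_{a∈A} ∑_k δ_{ka}) * (∏_{b∈B} ∑_k δ_{-kb})`. -/
def PF (X : List (ZLat ι)) (r : Submodule ℝ (Amb ι)) (u : Amb ι) : ZLat ι → ℤ :=
  fun γ => (-1) ^ (negPart X r u).length *
    partFn (signedOut X r u) (γ + (negPart X r u).sum)

/-- The support region `-∑_{b∈B} b + C(A, -B)` of `𝓟_{X\r}^F`, as a subset of `Γ`. -/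
def PFsupp (X : List (ZLat ι)) (r : Submodule ℝ (Amb ι)) (u : Amb ι) : Set (ZLat ι) :=
  {γ | castV (γ + (negPart X r u).sum) ∈ coneC (signedOut X r u)}

/-- Convolution of two functions on the lattice. -/
def conv (f g : ZLat ι → ℤ) : ZLat ι → ℤ := fun γ => ∑ᶠ μ, f (γ - μ) * g μ

/-- The union of all rational hyperplanes (inside the span of `Y`). -/
def hyperUnion (Y : List (ZLat ι)) : Set (Amb ι) :=
  {v | ∃ H, IsRational Y H ∧ Module.finrank ℝ H + 1 = Module.finrank ℝ (spanOf Y) ∧ v ∈ H}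

/-- A tope for `Y`: a connected component of the complement (in the span of `Y`) of the
union of the hyperplanes spanned by sublists of `Y`. -/
def IsTope (Y : List (ZLat ι)) (τ : Set (Amb ι)) : Prop :=
  ∃ v ∈ (spanOf Y : Set (Amb ι)) \ hyperUnion Y,
    τ = connectedComponentIn ((spanOf Y : Set (Amb ι)) \ hyperUnion Y) v

/-- The set of singular vectors: the union of the cones `C(Y)` over sublists `Y` of `X`
not spanning `V`. -/
def singSet (X : List (ZLat ι)) : Set (Amb ι) :=
  {v | ∃ Y : List (ZLat ι), (∀ a ∈ Y, a ∈ X) ∧ spanOf Y ≠ ⊤ ∧ v ∈ coneC Y}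

/-- A big cell: a connected component of the complement of the set of singular vectors. -/
def IsBigCell (X : List (ZLat ι)) (c : Set (Amb ι)) : Prop :=
  ∃ v ∈ (singSet X)ᶜ, c = connectedComponentIn (singSet X)ᶜ v

/-- Minkowski difference of sets, `A - B`. -/
def sdiffSet (A B : Set (Amb ι)) : Set (Amb ι) := {x | ∃ a ∈ A, ∃ b ∈ B, x = a - b}

end

/-!
`𝓟_{X\r}^F` is a product of one-sided geometric series `∑_{k≥0} δ_{ka}` (`a ∈ A`) and
`-∑_{k≥1} δ_{-kb}` (`b ∈ B`), and `∇_a`, resp. `∇_b`, inverts each of them, so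
`∇_{X\r} 𝓟_{X\r}^F = δ₀`. All these series point into the half-space `⟨u, ·⟩ > 0`, while `g`
lives on `r ⊆ u^⊥`; hence every value of `𝓟_{X\r}^F * g` is a finite sum and the difference
operators pass through the convolution. This gives `∇_{X\r}(𝓟_{X\r}^F * g) = g`, hence
injectivity. For any subspace `s`, `∇_{X\s}` splits into `∇_{(X\r)\s}`, which reduces
`𝓟_{X\r}^F` to the analogous function of `(X\r) ∩ s`, supported on `s`, and `∇_{(X∩r)\s}`,
which maps `g` to a function supported on `s` because `g ∈ 𝓕(X∩r)`.
-/

variable {ι : Type*}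

section Lattice

def castVHom : ZLat ι →+ Amb ι := (Int.castAddHom ℝ).compLeft ι

def latticeIn (s : Submodule ℝ (Amb ι)) : AddSubgroup (ZLat ι) :=
  s.toAddSubgroup.comap castVHom

variable [Fintype ι]

def pairingHom (u : Amb ι) : ZLat ι →+ ℝ :=
  (dotProductBilin ℝ ℝ u).toAddMonoidHom.comp castVHom

lemma dotR_castV_neg (u : Amb ι) (a : ZLat ι) :
    dotR u (castV (-a)) = -dotR u (castV a) :=
  map_neg (pairingHom u) a

lemma dotR_castV_sub (u : Amb ι) (a b : ZLat ι) :
    dotR u (castV (a - b)) = dotR u (castV a) - dotR u (castV b) :=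
  map_sub (pairingHom u) a b

lemma dotR_castV_sum_smul {κ : Type*} [Fintype κ] (u : Amb ι) (k : κ → ℕ) (v : κ → ZLat ι) :
    dotR u (castV (∑ i, (k i : ℤ) • v i)) = ∑ i, (k i : ℝ) * dotR u (castV (v i)) := by
  change pairingHom u _ = ∑ i, (k i : ℝ) * pairingHom u (v i)
  rw [map_sum]
  refine Finset.sum_congr rfl fun i _ => ?_
  rw [map_zsmul, zsmul_eq_mul, Int.cast_natCast]

end Lattice

section Difference

lemma nab_comm (a b : ZLat ι) (f : ZLat ι → ℤ) : nab a (nab b f) = nab b (nab a f) := by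
  funext x
  simp only [nab, sub_right_comm x a b]
  ring

lemma nabL_cons (a : ZLat ι) (L : List (ZLat ι)) (f : ZLat ι → ℤ) :
    nabL (a :: L) f = nab a (nabL L f) := rfl

lemma nabL_append (L₁ L₂ : List (ZLat ι)) (f : ZLat ι → ℤ) :
    nabL (L₁ ++ L₂) f = nabL L₁ (nabL L₂ f) := List.foldr_append

lemma nabL_perm {L L' : List (ZLat ι)} (h : L.Perm L') (f : ZLat ι → ℤ) :
    nabL L f = nabL L' f := by
  induction h with
  | nil => rfl
  | cons a _ ih => rw [nabL_cons, nabL_cons, ih]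
  | swap a b L => simp only [nabL_cons, nab_comm]
  | trans _ _ ih₁ ih₂ => rw [ih₁, ih₂]

end Difference

section Convolution

def ConvFinite (f g : ZLat ι → ℤ) : Prop :=
  ∀ γ, HasFiniteSupport fun μ => f (γ - μ) * g μ

variable {f g : ZLat ι → ℤ}

lemma conv_comm (f g : ZLat ι → ℤ) : conv f g = conv g f := by
  funext γ
  rw [conv, conv, ← finsum_comp_equiv (Equiv.subLeft γ)]
  simp [mul_comm]

lemma ConvFinite.symm (h : ConvFinite f g) : ConvFinite g f := fun γ =>
  ((h γ).preimage (Equiv.subLeft γ).injective.injOn).subset fun ν hν => by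
    simpa [and_comm] using hν

lemma ConvFinite.nab_left (h : ConvFinite f g) (a : ZLat ι) : ConvFinite (nab a f) g := by
  intro γ
  refine (Set.Finite.union (h γ) (h (γ - a))).subset ?_
  simp only [nab, sub_right_comm γ _ a, sub_mul]
  exact support_sub _ _

lemma nab_conv_left (h : ConvFinite f g) (a : ZLat ι) :
    nab a (conv f g) = conv (nab a f) g := by
  funext γ
  simp only [nab, conv]
  rw [← finsum_sub_distrib (h γ) (h (γ - a))]
  simp only [sub_right_comm γ _ a, sub_mul]

lemma ConvFinite.nabL_left (h : ConvFinite f g) (L : List (ZLat ι)) :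
    ConvFinite (nabL L f) g := by
  induction L with
  | nil => exact h
  | cons a L ih => exact ih.nab_left a

lemma ConvFinite.nabL_right (h : ConvFinite f g) (L : List (ZLat ι)) :
    ConvFinite f (nabL L g) :=
  (h.symm.nabL_left L).symm

lemma nabL_conv_left (h : ConvFinite f g) (L : List (ZLat ι)) :
    nabL L (conv f g) = conv (nabL L f) g := by
  induction L with
  | nil => rfl
  | cons a L ih => rw [nabL_cons, ih, nab_conv_left (h.nabL_left L), nabL_cons]

lemma nabL_conv_right (h : ConvFinite f g) (L : List (ZLat ι)) :
    nabL L (conv f g) = conv f (nabL L g) := by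
  rw [conv_comm, nabL_conv_left h.symm, conv_comm]

lemma conv_delta0_left [Fintype ι] (g : ZLat ι → ℤ) : conv delta0 g = g := by
  funext γ
  rw [conv, finsum_eq_single _ γ]
  · simp [delta0]
  · intro μ hμ
    simp [delta0, sub_eq_zero, Ne.symm hμ]

lemma support_conv_subset (H : AddSubgroup (ZLat ι)) (hf : support f ⊆ H) (hg : support g ⊆ H) :
    support (conv f g) ⊆ H := by
  intro γ hγ
  by_contra hγH
  refine hγ (finsum_eq_zero_of_forall_eq_zero fun μ => ?_)
  by_contra hμ
  have hsum := H.add_mem (hf (left_ne_zero_of_mul hμ)) (hg (right_ne_zero_of_mul hμ))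
  exact hγH (by simpa using hsum)

end Convolution

section PartitionFunction

abbrev Reps (Y : List (ZLat ι)) (γ : ZLat ι) : Type :=
  {k : Fin Y.length → ℕ // ∑ i, (k i : ℤ) • Y.get i = γ}

lemma partFn_eq_card (Y : List (ZLat ι)) (γ : ZLat ι) : partFn Y γ = Nat.card (Reps Y γ) := rfl

def repsCongr {Y : List (ZLat ι)} {γ γ' : ZLat ι} (h : γ = γ') : Reps Y γ ≃ Reps Y γ' :=
  Equiv.subtypeEquivRight fun _ => by rw [h]

def repsConsEquiv (y : ZLat ι) (Y : List (ZLat ι)) (γ : ZLat ι) :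
    Reps (y :: Y) γ ≃ Σ c : ℕ, Reps Y (γ - (c : ℤ) • y) where
  toFun k := ⟨k.1 0, Fin.tail k.1,
    eq_sub_of_add_eq' (by simpa [Fin.sum_univ_succ, Fin.tail] using k.2)⟩
  invFun p := ⟨Fin.cons p.1 p.2.1, by
    simp only [List.length_cons, Fin.sum_univ_succ, Fin.cons_zero, Fin.cons_succ,
      List.get_cons_zero]
    change _ + ∑ i, (p.2.1 i : ℤ) • Y.get i = γ
    rw [p.2.2, add_sub_cancel]⟩
  left_inv k := Subtype.ext (Fin.cons_self_tail k.1)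
  right_inv _ := rfl

lemma reps_perm {Y Y' : List (ZLat ι)} (h : Y.Perm Y') (γ : ZLat ι) :
    Nonempty (Reps Y γ ≃ Reps Y' γ) := by
  induction h generalizing γ with
  | nil => exact ⟨Equiv.refl _⟩
  | cons a _ ih =>
    exact ⟨(repsConsEquiv a _ γ).trans <|
      (Equiv.sigmaCongrRight fun _ => (ih _).some).trans (repsConsEquiv a _ γ).symm⟩
  | swap a b Y =>
    let swapSummands : (Σ c : ℕ, Σ e : ℕ, Reps Y (γ - (c : ℤ) • b - (e : ℤ) • a)) ≃
        Σ e : ℕ, Σ c : ℕ, Reps Y (γ - (e : ℤ) • a - (c : ℤ) • b) :=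
      { toFun := fun q => ⟨q.2.1, q.1, repsCongr (sub_right_comm _ _ _) q.2.2⟩
        invFun := fun q => ⟨q.2.1, q.1, repsCongr (sub_right_comm _ _ _) q.2.2⟩
        left_inv := fun _ => rfl
        right_inv := fun _ => rfl }
    exact ⟨(repsConsEquiv b _ γ).trans <|
      (Equiv.sigmaCongrRight fun _ => repsConsEquiv a Y _).trans <| swapSummands.trans <|
      (Equiv.sigmaCongrRight fun _ => (repsConsEquiv b Y _).symm).trans
        (repsConsEquiv a _ γ).symm⟩
  | trans _ _ ih₁ ih₂ => exact ⟨(ih₁ γ).some.trans (ih₂ γ).some⟩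

lemma partFn_perm {Y Y' : List (ZLat ι)} (h : Y.Perm Y') : partFn Y = partFn Y' :=
  funext fun γ => congrArg _ (Nat.card_congr (reps_perm h γ).some)

lemma partFn_nil [Fintype ι] : partFn ([] : List (ZLat ι)) = delta0 := by
  funext γ
  by_cases hγ : γ = 0
  · subst hγ
    have : Unique (Reps ([] : List (ZLat ι)) 0) := ⟨⟨⟨finZeroElim, by simp⟩⟩, fun k =>
      Subtype.ext (funext finZeroElim)⟩
    simp [partFn_eq_card, delta0]
  · have : IsEmpty (Reps ([] : List (ZLat ι)) γ) := ⟨fun k => hγ (by simpa using k.2.symm)⟩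
    simp [partFn_eq_card, delta0, hγ]

lemma nonempty_reps_of_partFn_ne_zero {Y : List (ZLat ι)} {γ : ZLat ι} (h : partFn Y γ ≠ 0) :
    Nonempty (Reps Y γ) :=
  (Nat.card_ne_zero.1 (Nat.cast_ne_zero.1 h)).1

lemma finite_setOf_sum_natCast_mul_le {κ : Type*} [Fintype κ] {d : κ → ℝ} (hd : ∀ i, 0 < d i)
    (M : ℝ) : {k : κ → ℕ | ∑ i, (k i : ℝ) * d i ≤ M}.Finite := by
  refine (Set.Finite.pi fun i => Set.finite_Iic ⌊M / d i⌋₊).subset fun k hk i _ => Nat.le_floor ?_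
  rw [le_div_iff₀ (hd i)]
  exact (Finset.single_le_sum (fun j _ => mul_nonneg (k j).cast_nonneg (hd j).le)
    (Finset.mem_univ i)).trans hk

variable [Fintype ι]

lemma finite_reps {u : Amb ι} {Y : List (ZLat ι)} (hY : ∀ a ∈ Y, 0 < dotR u (castV a))
    (γ : ZLat ι) : Finite (Reps Y γ) := by
  refine Set.finite_coe_iff.2 ((finite_setOf_sum_natCast_mul_le (fun i => hY _ (Y.get_mem i))
    (dotR u (castV γ))).subset fun k (hk : ∑ i, (k i : ℤ) • Y.get i = γ) => ?_)
  rw [Set.mem_ofPred_eq, ← dotR_castV_sum_smul, hk]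

/-- Splitting off whether the coefficient of `y` vanishes. -/
lemma partFn_cons {u : Amb ι} {y : ZLat ι} {Y : List (ZLat ι)}
    (hY : ∀ a ∈ y :: Y, 0 < dotR u (castV a)) (γ : ZLat ι) :
    partFn (y :: Y) γ = partFn Y γ + partFn (y :: Y) (γ - y) := by
  have e : Reps (y :: Y) γ ≃ Reps Y γ ⊕ Reps (y :: Y) (γ - y) :=
    (repsConsEquiv y Y γ).trans <| (Equiv.sigmaNatSucc _).trans <|
      Equiv.sumCongr (repsCongr (by simp)) <|
        (Equiv.sigmaCongrRight fun c => repsCongr (by push_cast [add_smul]; abel)).trans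
          (repsConsEquiv y Y (γ - y)).symm
  have := finite_reps hY (γ - y)
  have := finite_reps (fun a ha => hY a (List.mem_cons_of_mem y ha)) γ
  simp only [partFn_eq_card, Nat.card_congr e, Nat.card_sum, Nat.cast_add]

end PartitionFunction

section SpecialFunction

variable [Fintype ι] {u : Amb ι}

noncomputable def negList (u : Amb ι) (W : List (ZLat ι)) : List (ZLat ι) :=
  W.filter (fun a => decide (dotR u (castV a) < 0))

noncomputable def signedList (u : Amb ι) (W : List (ZLat ι)) : List (ZLat ι) :=
  W.map (fun a => if 0 < dotR u (castV a) then a else -a)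

noncomputable def PFList (u : Amb ι) (W : List (ZLat ι)) : ZLat ι → ℤ :=
  fun γ => (-1) ^ (negList u W).length * partFn (signedList u W) (γ + (negList u W).sum)

lemma PF_eq_PFList (X : List (ZLat ι)) (r : Submodule ℝ (Amb ι)) (u : Amb ι) :
    PF X r u = PFList u (outSub X r) := rfl

lemma signedList_pos {W : List (ZLat ι)} (hW : ∀ a ∈ W, dotR u (castV a) ≠ 0) :
    ∀ b ∈ signedList u W, 0 < dotR u (castV b) := by
  simp only [signedList, List.mem_map]
  rintro _ ⟨a, ha, rfl⟩
  split_ifs with h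
  · exact h
  · rw [dotR_castV_neg, neg_pos]
    exact (not_lt.1 h).lt_of_ne (hW a ha)

lemma PFList_perm {W W' : List (ZLat ι)} (h : W.Perm W') : PFList u W = PFList u W' := by
  have hneg : (negList u W).Perm (negList u W') := h.filter _
  funext γ
  have hsgn : (signedList u W).Perm (signedList u W') := h.map _
  rw [PFList, PFList, partFn_perm hsgn, hneg.length_eq, hneg.sum_eq]

lemma PFList_nil : PFList u ([] : List (ZLat ι)) = delta0 := by
  funext γ
  simp [PFList, negList, signedList, partFn_nil]

lemma PFList_cons_of_pos {a : ZLat ι} {W : List (ZLat ι)} (ha : 0 < dotR u (castV a))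
    (γ : ZLat ι) : PFList u (a :: W) γ =
      (-1) ^ (negList u W).length * partFn (a :: signedList u W) (γ + (negList u W).sum) := by
  simp [PFList, negList, signedList, ha, ha.le.not_gt]

lemma PFList_cons_of_neg {a : ZLat ι} {W : List (ZLat ι)} (ha : dotR u (castV a) < 0)
    (γ : ZLat ι) : PFList u (a :: W) γ =
      -((-1) ^ (negList u W).length *
        partFn (-a :: signedList u W) (γ + a + (negList u W).sum)) := by
  simp [PFList, negList, signedList, ha, ha.not_gt, pow_succ, add_assoc]

lemma nab_PFList_cons {a : ZLat ι} {W : List (ZLat ι)} (ha : dotR u (castV a) ≠ 0)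
    (hW : ∀ b ∈ W, dotR u (castV b) ≠ 0) : nab a (PFList u (a :: W)) = PFList u W := by
  have hS := signedList_pos hW
  funext γ
  rcases ha.lt_or_gt with hneg | hpos
  · have hrec := partFn_cons (u := u) (y := -a) (Y := signedList u W)
      (List.forall_mem_cons.2 ⟨by rw [dotR_castV_neg]; linarith, hS⟩) (γ + (negList u W).sum)
    rw [nab, PFList_cons_of_neg hneg, PFList_cons_of_neg hneg, PFList, sub_add_cancel,
      show γ + a + (negList u W).sum = γ + (negList u W).sum - -a by abel, hrec]
    ring
  · have hrec := partFn_cons (u := u) (y := a) (Y := signedList u W)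
      (List.forall_mem_cons.2 ⟨hpos, hS⟩) (γ + (negList u W).sum)
    rw [nab, PFList_cons_of_pos hpos, PFList_cons_of_pos hpos, PFList,
      show γ - a + (negList u W).sum = γ + (negList u W).sum - a by abel, hrec]
    ring

lemma nabL_PFList {L W' W : List (ZLat ι)} (hW : ∀ b ∈ W, dotR u (castV b) ≠ 0)
    (h : W.Perm (L ++ W')) : nabL L (PFList u W) = PFList u W' := by
  induction L generalizing W' with
  | nil => exact PFList_perm h
  | cons a L ih =>
    have h' : W.Perm (L ++ a :: W') := h.trans List.perm_middle.symm
    have hW' : ∀ b ∈ a :: W', dotR u (castV b) ≠ 0 := fun b hb =>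
      hW b (h'.symm.subset (List.mem_append_right L hb))
    rw [nabL_cons, ih h', nab_PFList_cons (hW' a List.mem_cons_self)
      fun b hb => hW' b (List.mem_cons_of_mem a hb)]

lemma nonempty_reps_of_PFList_ne_zero {W : List (ZLat ι)} {γ : ZLat ι} (h : PFList u W γ ≠ 0) :
    Nonempty (Reps (signedList u W) (γ + (negList u W).sum)) :=
  nonempty_reps_of_partFn_ne_zero (right_ne_zero_of_mul h)

lemma support_PFList_subset {s : Submodule ℝ (Amb ι)} {W : List (ZLat ι)}
    (hWs : ∀ a ∈ W, castV a ∈ s) : support (PFList u W) ⊆ latticeIn s := by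
  intro γ hγ
  obtain ⟨k, hk⟩ := (nonempty_reps_of_PFList_ne_zero hγ).some
  have hS : ∀ b ∈ signedList u W, b ∈ latticeIn s := by
    simp only [signedList, List.mem_map]
    rintro _ ⟨a, ha, rfl⟩
    split_ifs
    · exact hWs a ha
    · exact neg_mem (hWs a ha)
  have hsum : γ + (negList u W).sum ∈ latticeIn s :=
    hk ▸ sum_mem fun i _ => zsmul_mem (hS _ (List.get_mem _ _)) _
  have hneg : (negList u W).sum ∈ latticeIn s :=
    list_sum_mem fun b hb => hWs b (List.mem_of_mem_filter hb)
  simpa using sub_mem hsum hneg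

lemma convFinite_PFList {r : Submodule ℝ (Amb ι)} {W : List (ZLat ι)} {g : ZLat ι → ℤ}
    (hW : ∀ b ∈ W, dotR u (castV b) ≠ 0) (hur : ∀ v ∈ r, dotR u v = 0)
    (hg : support g ⊆ latticeIn r) : ConvFinite (PFList u W) g := by
  intro γ
  refine ((finite_setOf_sum_natCast_mul_le
    (fun i => signedList_pos hW _ ((signedList u W).get_mem i))
    (dotR u (castV (γ + (negList u W).sum)))).image
      fun k => γ + (negList u W).sum - ∑ i, (k i : ℤ) • (signedList u W).get i).subset ?_
  intro μ hμ
  obtain ⟨k, hk⟩ := (nonempty_reps_of_PFList_ne_zero (left_ne_zero_of_mul hμ)).some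
  have hμr : dotR u (castV μ) = 0 := hur _ (hg (right_ne_zero_of_mul hμ))
  refine ⟨k, ?_, by simp only [hk]; abel⟩
  rw [Set.mem_ofPred_eq, ← dotR_castV_sum_smul, hk,
    show γ - μ + (negList u W).sum = γ + (negList u W).sum - μ by abel,
    dotR_castV_sub, hμr, sub_zero]

end SpecialFunction

section Sublists

variable (Y : List (ZLat ι)) (r s : Submodule ℝ (Amb ι))

lemma perm_outSub_append_inSub : Y.Perm (outSub Y s ++ inSub Y s) := by
  have : inSub Y s = Y.filter fun a => !decide (castV a ∉ s) :=
    List.filter_congr fun a _ => by simp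
  rw [outSub, this]
  exact (List.filter_append_perm _ Y).symm

lemma perm_outSub_outSub_append_outSub_inSub :
    (outSub Y s).Perm (outSub (outSub Y r) s ++ outSub (inSub Y r) s) := by
  have h₁ : outSub (outSub Y s) r = outSub (outSub Y r) s := by
    simp only [outSub, List.filter_filter, Bool.and_comm]
  have h₂ : inSub (outSub Y s) r = outSub (inSub Y r) s := by
    simp only [outSub, inSub, List.filter_filter, Bool.and_comm]
  simpa [h₁, h₂] using perm_outSub_append_inSub (outSub Y s) r

lemma spanOf_inSub_le : spanOf (inSub Y s) ≤ s :=
  Submodule.span_le.2 fun _ ⟨_, ha, hv⟩ => hv ▸ of_decide_eq_true (List.mem_filter.1 ha).2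

lemma isRational_spanOf_inSub : IsRational Y (spanOf (inSub Y s)) :=
  ⟨_, fun _ ha => List.mem_of_mem_filter ha, rfl⟩

lemma outSub_spanOf_inSub : outSub Y (spanOf (inSub Y s)) = outSub Y s := by
  refine List.filter_congr fun a ha => ?_
  have : castV a ∈ spanOf (inSub Y s) ↔ castV a ∈ s :=
    ⟨fun h => spanOf_inSub_le Y s h, fun h =>
      Submodule.subset_span ⟨a, List.mem_filter.2 ⟨ha, decide_eq_true h⟩, rfl⟩⟩
  simp [this]

end Sublists

/-- `s` may be replaced by the rational subspace spanned by `Y ∩ s`. -/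
lemma memF.support_nabOut {Y : List (ZLat ι)} {g : ZLat ι → ℤ} (hg : memF Y g)
    (s : Submodule ℝ (Amb ι)) : support (nabOut Y s g) ⊆ {γ | castV γ ∈ s} := by
  have := hg _ (isRational_spanOf_inSub Y s)
  rw [nabOut, outSub_spanOf_inSub] at this
  exact this.trans fun _ hγ => spanOf_inSub_le Y s hγ

section Main

variable [Fintype ι] {X : List (ZLat ι)} {r : Submodule ℝ (Amb ι)} {u : Amb ι}
  {g : ZLat ι → ℤ}

lemma Reg.ne_zero_of_mem_outSub (hu : Reg X r u) : ∀ b ∈ outSub X r, dotR u (castV b) ≠ 0 :=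
  fun b hb => hu.2 b (List.mem_of_mem_filter hb) (of_decide_eq_true (List.mem_filter.1 hb).2)

lemma Reg.convFinite_PF (hu : Reg X r u) (hg : support g ⊆ {γ | castV γ ∈ r}) :
    ConvFinite (PF X r u) g :=
  convFinite_PFList hu.ne_zero_of_mem_outSub hu.1 hg

lemma nabOut_conv_PF (hu : Reg X r u) (hg : support g ⊆ {γ | castV γ ∈ r}) :
    nabOut X r (conv (PF X r u) g) = g := by
  rw [nabOut, nabL_conv_left (hu.convFinite_PF hg), PF_eq_PFList,
    nabL_PFList (W' := []) hu.ne_zero_of_mem_outSub (by simp), PFList_nil,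
    conv_delta0_left]

lemma memF_conv_PF (hu : Reg X r u) (hg : memFrel X r g) : memF X (conv (PF X r u) g) := by
  intro s _
  have hfin := hu.convFinite_PF hg.1
  have hsplit : nabOut X s (conv (PF X r u) g) =
      conv (PFList u (inSub (outSub X r) s)) (nabOut (inSub X r) s g) := by
    rw [nabOut, nabL_perm (perm_outSub_outSub_append_outSub_inSub X r s), nabL_append,
      nabL_conv_right hfin, nabL_conv_left (hfin.nabL_right _), PF_eq_PFList,
      nabL_PFList hu.ne_zero_of_mem_outSub (perm_outSub_append_inSub _ s), nabOut]
  rw [hsplit]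
  exact support_conv_subset (latticeIn s)
    (support_PFList_subset fun a ha => of_decide_eq_true (List.mem_filter.1 ha).2)
    (hg.2.support_nabOut s)

end Main

theorem PF_conv_inj_general {ι : Type*} [Fintype ι] (X : List (ZLat ι))
    (r : Submodule ℝ (Amb ι)) (u : Amb ι) (hu : Reg X r u) :
    (∀ g : ZLat ι → ℤ, memFrel X r g →
      memF X (conv (PF X r u) g) ∧ nabOut X r (conv (PF X r u) g) = g) ∧
    ∀ g₁ g₂ : ZLat ι → ℤ, memFrel X r g₁ → memFrel X r g₂ →
      conv (PF X r u) g₁ = conv (PF X r u) g₂ → g₁ = g₂ := by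
  refine ⟨fun g hg => ⟨memF_conv_PF hu hg, nabOut_conv_PF hu hg.1⟩, fun g₁ g₂ h₁ h₂ h => ?_⟩
  rw [← nabOut_conv_PF hu h₁.1, ← nabOut_conv_PF hu h₂.1, h]

/-- The map `g ↦ 𝓟_{X\r}^F * g` is an injection of `𝓕(X∩r)` into `𝓕(X)`, and
`∇_{X\r}(𝓟_{X\r}^F * g) = g` for all `g ∈ 𝓕(X∩r)`. -/
theorem PF_conv_inj {ι : Type*} [Fintype ι] (X : List (ZLat ι))
    (hX0 : ∀ a ∈ X, a ≠ 0) (hspan : spanOf X = ⊤)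
    (r : Submodule ℝ (Amb ι)) (hr : IsRational X r) (u : Amb ι) (hu : Reg X r u) :
    (∀ g : ZLat ι → ℤ, memFrel X r g →
      memF X (conv (PF X r u) g) ∧ nabOut X r (conv (PF X r u) g) = g) ∧
    ∀ g₁ g₂ : ZLat ι → ℤ, memFrel X r g₁ → memFrel X r g₂ →
      conv (PF X r u) g₁ = conv (PF X r u) g₂ → g₁ = g₂ :=
  PF_conv_inj_general X r u hu
end

section
/- Given a big cell c, if τ₁, …, τ_k are all the topes contained in c, then c - B(X) = ⋃_{i=1}^k (τ_i - B(X)). -/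
open Function

attribute [local instance] Classical.propDecidable

noncomputable section

variable {ι : Type*} [Fintype ι]

/-! Given `x ∈ 𝔠` and `b ∈ B(X)`, move both by `ε • v`, where `v` lies in no proper rational
subspace and `b + v ∈ B(X)`; such `v` exist because `B(X)` has interior points and the proper
rational subspaces are finitely many and nowhere dense. For small `ε > 0` the segment from `x` to
`x + ε • v` meets these subspaces at most at `x`, so it stays in `𝔠` and ends at a regular point.
Every singular cone lies in a rational hyperplane, so the tope of that point stays inside `𝔠`.
Finally `b + ε • v ∈ B(X)` by convexity and `x - b = (x + ε • v) - (b + ε • v)`. -/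

open Set Filter Topology

set_option linter.unusedSectionVars false

theorem Submodule.subsingleton_setOf_add_smul_mem {K E : Type*} [Field K] [AddCommGroup E]
    [Module K E] (H : Submodule K E) (x : E) {v : E} (hv : v ∉ H) :
    {t : K | x + t • v ∈ H}.Subsingleton := by
  intro s hs t ht
  by_contra hst
  have hdiff : (s - t) • v ∈ H := by
    simpa only [add_sub_add_left_eq_sub, sub_smul] using H.sub_mem hs ht
  exact hv ((H.smul_mem_iff (sub_ne_zero.2 hst)).1 hdiff)

theorem Set.Finite.eventually_notMem_nhdsGT {S : Set ℝ} (hS : S.Finite) (a : ℝ) :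
    ∀ᶠ t in 𝓝[>] a, t ∉ S := by
  have hnhds : (S \ {a})ᶜ ∈ 𝓝 a :=
    hS.sdiff.isClosed.isOpen_compl.mem_nhds fun h => h.2 rfl
  filter_upwards [nhdsWithin_le_nhds hnhds, self_mem_nhdsWithin] with t hdiff hat hmem
  exact hdiff ⟨hmem, ne_of_gt hat⟩

theorem eventually_forall_add_smul_notMem {E : Type*} [AddCommGroup E] [Module ℝ E]
    {ℱ : Set (Submodule ℝ E)} (hℱ : ℱ.Finite) (x : E) {v : E} (hv : ∀ H ∈ ℱ, v ∉ H) :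
    ∀ᶠ t in 𝓝[>] (0 : ℝ), ∀ H ∈ ℱ, x + t • v ∉ H := by
  have hfin : (⋃ H ∈ ℱ, {t : ℝ | x + t • v ∈ H}).Finite :=
    hℱ.biUnion fun H hH => (H.subsingleton_setOf_add_smul_mem x (hv H hH)).finite
  filter_upwards [hfin.eventually_notMem_nhdsGT 0] with t ht H hH hmem
  exact ht (mem_biUnion hH hmem)

theorem dense_biInter_compl_submodule {E : Type*} [NormedAddCommGroup E] [NormedSpace ℝ E]
    [FiniteDimensional ℝ E] {ℱ : Set (Submodule ℝ E)} (hℱ : ℱ.Finite) (hne : ∀ H ∈ ℱ, H ≠ ⊤) :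
    Dense (⋂ H ∈ ℱ, (H : Set E)ᶜ) := by
  refine dense_biInter_of_isOpen (fun H _ => H.closed_of_finiteDimensional.isOpen_compl)
    hℱ.countable fun H hH => interior_eq_empty_iff_dense_compl.1 ?_
  by_contra h
  exact hne H hH (H.eq_top_of_nonempty_interior' (nonempty_iff_ne_empty.2 h))

section Zonotope

variable (X : List (ZLat ι))

theorem spanOf_eq_span_range : spanOf X = Submodule.span ℝ (range (castV ∘ X.get)) := by
  rw [spanOf, range_comp, Set.range_list_get]

theorem zono_eq_image :
    zono X = Fintype.linearCombination ℝ (castV ∘ X.get) '' Icc 0 1 := by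
  ext v
  simp [zono, Fintype.linearCombination_apply, Pi.le_def, forall_and, eq_comm]

theorem convex_zono : Convex ℝ (zono X) :=
  zono_eq_image X ▸ (convex_Icc 0 1).linear_image _

theorem interior_zono_nonempty (hspan : spanOf X = ⊤) : (interior (zono X)).Nonempty := by
  set f := Fintype.linearCombination ℝ (castV ∘ X.get)
  have hf : IsOpenMap f := f.isOpenMap_of_finiteDimensional <|
    (span_range_eq_top_iff_surjective_fintypeLinearCombination ℝ _).1
      (spanOf_eq_span_range X ▸ hspan)
  have hhalf : (fun _ => 1 / 2 : Fin X.length → ℝ) ∈ interior (Icc 0 1) :=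
    mem_interior_iff_mem_nhds.2 (pi_Icc_mem_nhds (fun _ => by norm_num) fun _ => by norm_num)
  rw [zono_eq_image]
  exact ⟨_, hf.image_interior_subset _ ⟨_, hhalf, rfl⟩⟩

end Zonotope

section Rational

variable (X : List (ZLat ι))

def properRationals : Set (Submodule ℝ (Amb ι)) := {H | IsRational X H ∧ H ≠ ⊤}

theorem finite_setOf_isRational : {H : Submodule ℝ (Amb ι) | IsRational X H}.Finite := by
  refine ((X.finite_toSet.image castV).finite_subsets.image (Submodule.span ℝ)).subset ?_
  rintro H ⟨Y, hY, rfl⟩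
  exact ⟨castV '' {a | a ∈ Y}, image_mono hY, rfl⟩

theorem finite_properRationals : (properRationals X).Finite :=
  (finite_setOf_isRational X).subset fun _ hH => hH.1

variable {X}

theorem IsRational.sup_span_singleton {r : Submodule ℝ (Amb ι)} (hr : IsRational X r)
    {a : ZLat ι} (ha : a ∈ X) : IsRational X (r ⊔ Submodule.span ℝ {castV a}) := by
  obtain ⟨Y, hY, rfl⟩ := hr
  refine ⟨a :: Y, List.forall_mem_cons.2 ⟨ha, hY⟩, ?_⟩
  have hinsert : castV '' {b | b ∈ a :: Y} = insert (castV a) (castV '' {b | b ∈ Y}) := by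
    ext
    simp [or_and_right, exists_or, eq_comm]
  rw [spanOf, spanOf, hinsert, Submodule.span_insert, sup_comm]

theorem IsRational.exists_hyperplane_ge (hspan : spanOf X = ⊤) {r : Submodule ℝ (Amb ι)}
    (hr : IsRational X r) (hr_ne : r ≠ ⊤) :
    ∃ H, IsRational X H ∧ Module.finrank ℝ H + 1 = Module.finrank ℝ (Amb ι) ∧ r ≤ H := by
  obtain ⟨H, ⟨⟨hH, hH_ne⟩, hrH⟩, hmax⟩ := Set.exists_max_image _
    (fun H : Submodule ℝ (Amb ι) => Module.finrank ℝ H)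
    ((finite_properRationals X).subset (sep_subset _ fun H => r ≤ H)) ⟨r, ⟨hr, hr_ne⟩, le_rfl⟩
  obtain ⟨a, haX, haH⟩ : ∃ a ∈ X, castV a ∉ H := by
    by_contra! h
    refine hH_ne (top_le_iff.1 (hspan ▸ Submodule.span_le.2 ?_))
    rintro _ ⟨a, ha, rfl⟩
    exact h a ha
  have hrank := Submodule.finrank_sup_span_singleton haH
  have hsup : H ⊔ Submodule.span ℝ {castV a} = ⊤ := by
    by_contra hne
    have := hmax _ ⟨⟨hH.sup_span_singleton haX, hne⟩, hrH.trans le_sup_left⟩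
    omega
  refine ⟨H, hH, ?_, hrH⟩
  rw [hsup, finrank_top] at hrank
  exact hrank.symm

theorem singSet_subset_hyperUnion (hspan : spanOf X = ⊤) : singSet X ⊆ hyperUnion X := by
  rintro u ⟨Y, hY, hY_ne, hu⟩
  obtain ⟨H, hH, hrank, hYH⟩ := IsRational.exists_hyperplane_ge hspan ⟨Y, hY, rfl⟩ hY_ne
  refine ⟨H, hH, by rw [hspan, finrank_top]; exact hrank, hYH ?_⟩
  obtain ⟨t, -, rfl⟩ := hu
  exact Submodule.sum_mem _ fun i _ =>
    Submodule.smul_mem _ _ (Submodule.subset_span ⟨Y.get i, Y.get_mem i, rfl⟩)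

theorem hyperUnion_subset_biUnion_properRationals (hspan : spanOf X = ⊤) :
    hyperUnion X ⊆ ⋃ H ∈ properRationals X, (H : Set (Amb ι)) := by
  rintro u ⟨H, hH, hrank, hu⟩
  refine mem_biUnion ⟨hH, fun htop => ?_⟩ hu
  rw [htop, hspan] at hrank
  omega

end Rational

variable {X : List (ZLat ι)}

theorem exists_add_mem_zono_forall_notMem (hspan : spanOf X = ⊤) (b : Amb ι) :
    ∃ v, b + v ∈ zono X ∧ ∀ H ∈ properRationals X, v ∉ H := by
  obtain ⟨z, hz⟩ := interior_zono_nonempty X hspan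
  obtain ⟨v, hv, hv_gen⟩ := (dense_biInter_compl_submodule (finite_properRationals X)
    fun _ hH => hH.2).inter_open_nonempty ((b + ·) ⁻¹' interior (zono X))
    (isOpen_interior.preimage (continuous_const_add b)) ⟨z - b, by simpa using hz⟩
  exact ⟨v, interior_subset hv, fun H hH => mem_iInter₂.1 hv_gen H hH⟩

theorem exists_tope_subset_mem_sdiffSet (hspan : spanOf X = ⊤) {c : Set (Amb ι)}
    (hc : IsBigCell X c) {x b : Amb ι} (hx : x ∈ c) (hb : b ∈ zono X) :
    ∃ τ', IsTope X τ' ∧ τ' ⊆ c ∧ x - b ∈ sdiffSet τ' (zono X) := by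
  obtain ⟨v₀, -, rfl⟩ := hc
  obtain ⟨v, hbv, hv⟩ := exists_add_mem_zono_forall_notMem hspan b
  obtain ⟨ε, hε : (0 : ℝ) < ε, hsmall⟩ := mem_nhdsGT_iff_exists_Ioc_subset.1 <|
    Filter.Eventually.and (Ioc_mem_nhdsGT zero_lt_one)
      (eventually_forall_add_smul_notMem (finite_properRationals X) x hv)
  set G := (spanOf X : Set (Amb ι)) \ hyperUnion X
  have hreg : ∀ t ∈ Ioc 0 ε, x + t • v ∈ G := fun t ht =>
    ⟨hspan ▸ trivial, fun hmem => by
      obtain ⟨H, hH, hmem⟩ := mem_iUnion₂.1 (hyperUnion_subset_biUnion_properRationals hspan hmem)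
      exact (hsmall ht).2 H hH hmem⟩
  have hG : G ⊆ (singSet X)ᶜ := fun y hy hsing => hy.2 (singSet_subset_hyperUnion hspan hsing)
  have hseg : (fun t : ℝ => x + t • v) '' Icc 0 ε ⊆ connectedComponentIn (singSet X)ᶜ v₀ := by
    rw [connectedComponentIn_eq hx]
    refine (isPreconnected_Icc.image _ (by fun_prop)).subset_connectedComponentIn
      ⟨0, left_mem_Icc.2 hε.le, by simp⟩ ?_
    rintro _ ⟨t, ⟨ht₀, htε⟩, rfl⟩
    rcases ht₀.eq_or_lt with rfl | ht₀
    · simpa using connectedComponentIn_subset _ _ hx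
    · exact hG (hreg t ⟨ht₀, htε⟩)
  have hεmem : ε ∈ Ioc 0 ε := ⟨hε, le_rfl⟩
  refine ⟨connectedComponentIn G (x + ε • v), ⟨_, hreg ε hεmem, rfl⟩, ?_,
    x + ε • v, mem_connectedComponentIn (hreg ε hεmem), b + ε • v, ?_, by abel⟩
  · rw [connectedComponentIn_eq (hseg ⟨ε, right_mem_Icc.2 hε.le, rfl⟩)]
    exact connectedComponentIn_mono _ hG
  · exact (convex_zono X).add_smul_mem hb hbv ⟨hε.le, (hsmall hεmem).1.2⟩

theorem bigcell_cover_general {ι : Type*} [Fintype ι] (X : List (ZLat ι))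
    (hspan : spanOf X = ⊤)
    (c : Set (Amb ι)) (hc : IsBigCell X c)
    (k : ℕ) (τ : Fin k → Set (Amb ι))
    (hτ : ∀ i, IsTope X (τ i) ∧ τ i ⊆ c)
    (hall : ∀ τ' : Set (Amb ι), IsTope X τ' → τ' ⊆ c → ∃ i, τ' = τ i) :
    sdiffSet c (zono X) = ⋃ i, sdiffSet (τ i) (zono X) := by
  refine Subset.antisymm ?_ (iUnion_subset fun i => ?_)
  · rintro _ ⟨x, hx, b, hb, rfl⟩
    obtain ⟨τ', hτ', hτ'c, hmem⟩ := exists_tope_subset_mem_sdiffSet hspan hc hx hb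
    obtain ⟨i, rfl⟩ := hall τ' hτ' hτ'c
    exact mem_iUnion.2 ⟨i, hmem⟩
  · rintro _ ⟨x, hx, b, hb, rfl⟩
    exact ⟨x, (hτ i).2 hx, b, hb, rfl⟩

/-- If `τ₁, …, τ_k` are all the topes contained in a big cell `𝔠`, then
`𝔠 - B(X) = ⋃ᵢ (τᵢ - B(X))`. -/
theorem bigcell_cover {ι : Type*} [Fintype ι] (X : List (ZLat ι))
    (hX0 : ∀ a ∈ X, a ≠ 0) (hspan : spanOf X = ⊤)
    (c : Set (Amb ι)) (hc : IsBigCell X c)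
    (k : ℕ) (τ : Fin k → Set (Amb ι))
    (hτ : ∀ i, IsTope X (τ i) ∧ τ i ⊆ c)
    (hall : ∀ τ' : Set (Amb ι), IsTope X τ' → τ' ⊆ c → ∃ i, τ' = τ i) :
    sdiffSet c (zono X) = ⋃ i, sdiffSet (τ i) (zono X) :=
  bigcell_cover_general X hspan c hc k τ hτ hall
end
end
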